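/- Let m≥1 be an integer. Then there exist δ>0 and an infinitely differentiable function φ:ℝ→ℝ such that for all t∈(0,δ): Σ_{n=0}^∞ e^{−tℰ_n}·ℰ_n^{−m} = ((−1)^m/((m−1)!·ω̄))·t^{m−1}·log t + φ(t). -/

import Mathlib

open Real Set
open scoped ENNReal NNReal

lemma const_of_hasDerivAt_zero {h : ℝ → ℝ} {a b : ℝ} (hs : ∀ x ∈ Ioo a b, HasDerivAt h (0:ℝ) x)
    {y z : ℝ} (hy : y ∈ Ioo a b) (hz : z ∈ Ioo a b) : h y = h z := by
  wlog hyz : y ≤ z generalizing y z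
  · exact (this hz hy (le_of_not_ge hyz)).symm
  have hsub : Icc y z ⊆ Ioo a b := fun x hx => ⟨lt_of_lt_of_le hy.1 hx.1, lt_of_le_of_lt hx.2 hz.2⟩
  exact (constant_of_has_deriv_right_zero
    (fun x hx => (hs x (hsub hx)).continuousAt.continuousWithinAt)
    (fun x hx => (hs x (hsub (Ico_subset_Icc_self hx))).hasDerivWithinAt)
    z (right_mem_Icc.mpr hyz)).symm

lemma analytic_primitive {φ f : ℝ → ℝ} (hφ : ContDiff ℝ (⊤ : ℕ∞) φ)
    (hf : ∀ x : ℝ, HasDerivAt f (φ x) x) : ContDiff ℝ (⊤ : ℕ∞) f := by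
  have hd : deriv f = φ := funext fun x => (hf x).deriv
  rw [contDiff_infty_iff_deriv]
  exact ⟨fun x => (hf x).differentiableAt, hd ▸ hφ⟩

noncomputable def gfun (a : ℝ) : ℝ → ℝ := dslope (fun s => 1 - Real.exp (-(a*s))) 0

lemma gfun_mul (a t : ℝ) : t * gfun a t = 1 - Real.exp (-(a*t)) := by
  rcases eq_or_ne t 0 with rfl | ht
  · simp
  · rw [gfun, dslope_of_ne _ ht, slope_def_field]
    field_simp
    simp only [mul_zero, neg_zero, Real.exp_zero, sub_self, sub_zero]
    ring

lemma gfun_smooth (a : ℝ) : ContDiff ℝ (⊤ : ℕ∞) (gfun a) := by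
  rw [contDiff_iff_contDiffAt]
  intro x
  rcases eq_or_ne x 0 with rfl | hx
  · have hf : AnalyticAt ℝ (fun s => 1 - Real.exp (-(a*s))) 0 :=
      analyticAt_const.sub (analyticAt_rexp.comp ((analyticAt_const.mul analyticAt_id).neg))
    obtain ⟨p, hp⟩ := hf
    exact (hp.has_fpower_series_dslope_fslope).analyticAt.contDiffAt
  · have hev : gfun a =ᶠ[nhds x] fun s => (1 - Real.exp (-(a*s))) / s := by
      filter_upwards [isOpen_ne.mem_nhds hx] with s hs
      rw [gfun, dslope_of_ne _ hs, slope_def_field]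
      simp
    refine ContDiffAt.congr_of_eventuallyEq ?_ hev
    exact ContDiffAt.div (by fun_prop) contDiffAt_id hx

lemma gfun_pos (a : ℝ) (ha : 0 < a) (t : ℝ) : 0 < gfun a t := by
  rcases lt_trichotomy t 0 with ht | rfl | ht
  · have h1 : 1 - Real.exp (-(a*t)) < 0 := by
      have : 0 < -(a*t) := by nlinarith
      nlinarith [Real.one_lt_exp_iff.mpr this]
    nlinarith [gfun_mul a t]
  · have hd : HasDerivAt (fun s => 1 - Real.exp (-(a*s))) a 0 := by
      have h1 : HasDerivAt (fun s : ℝ => -(a*s)) (-a) 0 := by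
        exact ((hasDerivAt_id (0:ℝ)).const_mul a).neg.congr_deriv (by simp)
      exact ((hasDerivAt_const (0:ℝ) (1:ℝ)).sub h1.exp).congr_deriv (by simp)
    have : gfun a 0 = a := by rw [gfun, dslope_same, hd.deriv]
    linarith
  · have h1 : 0 < 1 - Real.exp (-(a*t)) := by
      have h2 : Real.exp (-(a*t)) < 1 := by
        rw [Real.exp_lt_one_iff]; nlinarith
      linarith
    nlinarith [gfun_mul a t]

lemma summable_aux (ω : ℝ) (hω : 0 < ω) (c : ℝ) (hc : 0 < c) (m : ℕ) :
    Summable (fun n : ℕ => Real.exp (-(c * (ω * (n + 1/2)))) / (ω * (n + 1/2))^m) := by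
  have hE : ∀ n : ℕ, ω/2 ≤ ω * (n + 1/2) := by
    intro n
    have : (0:ℝ) ≤ n := n.cast_nonneg
    nlinarith
  have hEpos : ∀ n : ℕ, (0:ℝ) < ω * (n + 1/2) := fun n => lt_of_lt_of_le (by linarith) (hE n)
  have hgeo : Summable (fun n : ℕ => (Real.exp (-(c*ω/2)) * (2/ω)^m) * Real.exp (-(c*ω)) ^ n) :=
    (summable_geometric_of_lt_one (Real.exp_nonneg _)
      (Real.exp_lt_one_iff.mpr (by nlinarith))).mul_left _
  refine Summable.of_nonneg_of_le (fun n => by positivity) (fun n => ?_) hgeo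
  have h1 : Real.exp (-(c * (ω * (n + 1/2)))) = Real.exp (-(c*ω/2)) * Real.exp (-(c*ω)) ^ n := by
    rw [← Real.exp_nat_mul, ← Real.exp_add]
    ring_nf
  have h2 : (ω * ((n:ℝ) + 1/2))⁻¹ ≤ 2/ω := by
    calc (ω * ((n:ℝ) + 1/2))⁻¹ ≤ (ω/2)⁻¹ := inv_anti₀ (by linarith) (hE n)
    _ = 2/ω := by rw [inv_div]
  calc Real.exp (-(c * (ω * (n + 1/2)))) / (ω * (n + 1/2))^m
      = Real.exp (-(c*ω/2)) * ((ω*(n+1/2))⁻¹)^m * Real.exp (-(c*ω)) ^ n := by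
        rw [h1, inv_pow]; ring
  _ ≤ Real.exp (-(c*ω/2)) * (2/ω)^m * Real.exp (-(c*ω)) ^ n := by
        gcongr
  _ = (Real.exp (-(c*ω/2)) * (2/ω)^m) * Real.exp (-(c*ω)) ^ n := by ring

lemma base_case (ω : ℝ) (hω : 0 < ω) :
    ∃ φ : ℝ → ℝ, ContDiff ℝ (⊤ : ℕ∞) φ ∧ ∀ t ∈ Ioi (0:ℝ),
      ∑' n : ℕ, Real.exp (-(t * (ω * (n + 1/2)))) / (ω * (n + 1/2))^1
        = ((-1:ℝ)^1 / ((Nat.factorial 0 : ℝ) * ω)) * t^0 * Real.log t + φ t := by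
  have hg_mul := gfun_mul (ω/2)
  have hg_smooth := gfun_smooth (ω/2)
  have hg_pos := gfun_pos (ω/2) (by linarith)
  refine ⟨fun s => (1/ω) * (Real.log (1 + Real.exp (-(ω/2*s))) - Real.log (gfun (ω/2) s)),
    ?_, ?_⟩
  · refine ContDiff.mul contDiff_const (ContDiff.sub ?_ ?_)
    · refine ContDiff.log ?_ (fun x => by positivity)
      fun_prop
    · exact ContDiff.log hg_smooth (fun x => (hg_pos x).ne')
  · intro t ht
    simp only [mem_Ioi] at ht
    set x := Real.exp (-(ω/2*t)) with hxdef
    have hx0 : 0 < x := Real.exp_pos _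
    have hx1 : x < 1 := by rw [hxdef, Real.exp_lt_one_iff]; nlinarith
    have hxabs : |x| < 1 := by rw [abs_of_pos hx0]; exact hx1
    have hsum := (Real.hasSum_log_sub_log_of_abs_lt_one hxabs).mul_left (1/ω)
    have heq : ∀ n : ℕ, 1/ω * ((2:ℝ) * (1 / (2 * n + 1)) * x ^ (2 * n + 1))
        = Real.exp (-(t * (ω * (n + 1/2)))) / (ω * (n + 1/2))^1 := by
      intro n
      have hxp : x ^ (2*n+1) = Real.exp (-(t * (ω * (n + 1/2)))) := by
        rw [hxdef, ← Real.exp_nat_mul]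
        congr 1
        push_cast
        ring
      rw [hxp, pow_one]
      have h1 : (2*(n:ℝ)+1) ≠ 0 := by positivity
      have h2 : ω * ((n:ℝ) + 1/2) ≠ 0 := by positivity
      field_simp
    have hsum2 := hsum
    rw [funext heq] at hsum2
    rw [hsum2.tsum_eq, show (1:ℝ) - x = t * gfun (ω/2) t from (hg_mul t).symm,
      Real.log_mul (ne_of_gt ht) (hg_pos t).ne']
    simp only [pow_one, pow_zero, Nat.factorial_zero, Nat.cast_one, one_mul, mul_one]
    ring

lemma main_lemma (ω : ℝ) (hω : 0 < ω) (m : ℕ) (hm : 1 ≤ m) :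
    ∃ φ : ℝ → ℝ, ContDiff ℝ (⊤ : ℕ∞) φ ∧ ∀ t ∈ Ioi (0:ℝ),
      ∑' n : ℕ, Real.exp (-(t * (ω * (n + 1/2)))) / (ω * (n + 1/2))^m
        = ((-1:ℝ)^m / ((Nat.factorial (m-1) : ℝ) * ω)) * t^(m-1) * Real.log t + φ t := by
  induction m, hm using Nat.le_induction with
  | base => exact base_case ω hω
  | succ m hm IH =>
    obtain ⟨k, rfl⟩ : ∃ k, m = k + 1 := ⟨m - 1, by omega⟩
    obtain ⟨φ, hφ, hφeq⟩ := IH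
    simp only [Nat.add_sub_cancel] at hφeq ⊢
    set c1 : ℝ := (-1)^(k+1) / ((Nat.factorial k : ℝ) * ω) with hc1def
    set c2 : ℝ := (-1)^(k+1+1) / ((Nat.factorial (k+1) : ℝ) * ω) with hc2def
    have hfk : (0:ℝ) < Nat.factorial k := by positivity
    have hc2 : c2 * ((k:ℝ)+1) + c1 = 0 := by
      rw [hc1def, hc2def, Nat.factorial_succ]
      push_cast
      field_simp
      ring
    -- derivative of the (k+2)-sum
    have hderiv : ∀ t : ℝ, 0 < t →
        HasDerivAt (fun z => ∑' n : ℕ, Real.exp (-(z * (ω*(n+1/2)))) / (ω*(n+1/2))^(k+1+1))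
          (-(∑' n : ℕ, Real.exp (-(t * (ω*(n+1/2)))) / (ω*(n+1/2))^(k+1))) t := by
      intro t ht
      have h := hasDerivAt_tsum_of_isPreconnected
        (u := fun n : ℕ => Real.exp (-(t/2 * (ω*(n+1/2)))) / (ω*(n+1/2))^(k+1))
        (summable_aux ω hω (t/2) (by linarith) (k+1))
        (isOpen_Ioi (a := t/2)) (convex_Ioi _).isPreconnected
        (g := fun n z => Real.exp (-(z * (ω*(n+1/2)))) / (ω*(n+1/2))^(k+1+1))
        (g' := fun n z => -(Real.exp (-(z * (ω*(n+1/2)))) / (ω*(n+1/2))^(k+1)))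
        (fun n y hy => ?_) (fun n y hy => ?_)
        (mem_Ioi.mpr (by linarith : t/2 < t))
        (summable_aux ω hω t ht (k+1+1))
        (mem_Ioi.mpr (by linarith : t/2 < t))
      · rw [tsum_neg] at h
        exact h
      · have hE : (0:ℝ) < ω*((n:ℝ)+1/2) := by positivity
        have h1 : HasDerivAt (fun z : ℝ => Real.exp (-(z * (ω*(n+1/2)))))
            (Real.exp (-(y * (ω*(n+1/2)))) * -(ω*(n+1/2))) y :=
          ((hasDerivAt_mul_const (ω*((n:ℝ)+1/2))).neg).exp
        have h2 := h1.div_const ((ω*((n:ℝ)+1/2))^(k+1+1))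
        refine HasDerivAt.congr_deriv h2 (Eq.symm ?_)
        rw [pow_succ]
        field_simp
        ring
      · have hE : (0:ℝ) < ω*((n:ℝ)+1/2) := by positivity
        rw [norm_neg, Real.norm_eq_abs, abs_of_nonneg (by positivity)]
        have hy' : t/2 < y := mem_Ioi.mp hy
        rw [div_le_div_iff_of_pos_right (by positivity)]
        exact Real.exp_le_exp.mpr (by nlinarith)
    -- antiderivative of φ
    set prim : ℝ → ℝ := fun s => ∫ u in (1:ℝ)..s, φ u with hprimdef
    have hprim : ∀ x : ℝ, HasDerivAt prim (φ x) x := fun x =>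
      intervalIntegral.integral_hasDerivAt_right
        (hφ.continuous.intervalIntegrable _ _)
        (hφ.continuous.stronglyMeasurableAtFilter _ _)
        hφ.continuous.continuousAt
    have hprim_smooth : ContDiff ℝ (⊤ : ℕ∞) prim := analytic_primitive hφ hprim
    -- the function H is constant on (0,∞)
    set H : ℝ → ℝ := fun s =>
        (∑' n : ℕ, Real.exp (-(s * (ω*(n+1/2)))) / (ω*(n+1/2))^(k+1+1))
          - (c2 * (s^(k+1) * Real.log s) + (c1/((k:ℝ)+1)^2) * s^(k+1) - prim s) with hHdef
    have hH : ∀ t : ℝ, 0 < t → HasDerivAt H 0 t := by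
      intro t ht
      have A := hderiv t ht
      rw [hφeq t (mem_Ioi.mpr ht)] at A
      have B : HasDerivAt (fun s : ℝ => s^(k+1) * Real.log s)
          ((((k:ℝ)+1) * t^k) * Real.log t + t^(k+1) * t⁻¹) t := by
        have := (hasDerivAt_pow (k+1) t).mul (Real.hasDerivAt_log (ne_of_gt ht))
        exact this.congr_deriv (by simp)
      have C : HasDerivAt (fun s : ℝ => (c1/((k:ℝ)+1)^2) * s^(k+1))
          ((c1/((k:ℝ)+1)^2) * (((k:ℝ)+1) * t^k)) t := by
        have := (hasDerivAt_pow (k+1) t).const_mul ((c1/((k:ℝ)+1)^2))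
        simpa using this
      have total := A.sub (((B.const_mul c2).add C).sub (hprim t))
      have hval : -(c1 * t ^ k * Real.log t + φ t) -
          (c2 * ((((k:ℝ)+1) * t^k) * Real.log t + t^(k+1) * t⁻¹)
            + (c1/((k:ℝ)+1)^2) * (((k:ℝ)+1) * t^k) - φ t) = 0 := by
        have hpow : t^(k+1) * t⁻¹ = t^k := by
          rw [pow_succ]
          field_simp
        rw [hpow]
        have hk1 : ((k:ℝ)+1) ≠ 0 := by positivity
        have e1 : c1/((k:ℝ)+1)^2 * (((k:ℝ)+1) * t^k) = c1/((k:ℝ)+1) * t^k := by field_simp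
        have e2 : c1/((k:ℝ)+1) = -c2 := by rw [div_eq_iff hk1]; linear_combination hc2
        rw [e1, e2]
        linear_combination (-(t^k * Real.log t)) * hc2
      rw [hval] at total
      exact total
    have hconst : ∀ t : ℝ, 0 < t → H t = H 1 := by
      intro t ht
      exact const_of_hasDerivAt_zero (a := 0) (b := t + 2)
        (fun x hx => hH x hx.1) ⟨ht, by linarith⟩ ⟨one_pos, by linarith⟩
    refine ⟨fun s => (c1/((k:ℝ)+1)^2) * s^(k+1) - prim s + H 1, ?_, ?_⟩
    · exact ((contDiff_const.mul (contDiff_id.pow (k+1))).sub hprim_smooth).add contDiff_const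
    · intro t ht
      have hfinal := hconst t (mem_Ioi.mp ht)
      rw [hHdef] at hfinal
      simp only at hfinal
      linear_combination hfinal

theorem stmt18
    (ω : ℝ) (hω : 0 < ω) (m : ℕ) (hm : 1 ≤ m) :
    ∃ δ > (0:ℝ), ∃ φ : ℝ → ℝ, ContDiff ℝ (⊤ : ℕ∞) φ ∧ ∀ t ∈ Ioo (0:ℝ) δ,
      ∑' n : ℕ, Real.exp (-(t * (ω * (n + 1/2)))) / (ω * (n + 1/2))^m
        = ((-1:ℝ)^m / ((Nat.factorial (m-1) : ℝ) * ω)) * t^(m-1) * Real.log t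
          + φ t := by
  obtain ⟨φ, hφ, hφeq⟩ := main_lemma ω hω m hm
  exact ⟨1, one_pos, φ, hφ, fun t ht => hφeq t (mem_Ioi.mpr ht.1)⟩
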